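/- arXiv:1308.3894 — 2 statements merged into one kernel-verified Lean document; each statement's English description precedes it below -/
import Mathlib

section
/- In the triangular lattice with nearest-neighbour directions a_1,…,a_6, for any u : Λ → ℝ, ξ ∈ Λ, and index i (mod 6): D_i u(ξ)·D_{i+2} u(ξ) = ½|D_{i+1} u(ξ)|² − ½|D_{i+2} u(ξ+a_i)|² − ½|D_{i+3} u(ξ+a_{i+1})|² + ½|D_i D_{i+2} u(ξ)|², where D_j u(ξ) := u(ξ+a_j) − u(ξ) and D_i D_j u(ξ) := D_j u(ξ+a_i) − D_j u(ξ). -/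
/-- The six nearest-neighbour directions of the 2D triangular lattice:
`a_i = (cos(iπ/3), sin(iπ/3))`, indexed cyclically by `ZMod 6` (so `a 0 = (1,0)`,
`a (i+3) = −a i`, and `a (i+1) = a i + a (i+2)`). -/
noncomputable def aa (i : ZMod 6) : ℝ × ℝ :=
  (Real.cos (Real.pi * (i.val : ℝ) / 3), Real.sin (Real.pi * (i.val : ℝ) / 3))

/-- Nearest-neighbour finite difference `D_j u(ξ) := u(ξ + a_j) − u(ξ)`. -/
noncomputable def Dd (j : ZMod 6) (u : ℝ × ℝ → ℝ) (ξ : ℝ × ℝ) : ℝ :=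
  u (ξ + aa j) - u ξ

/-- Second difference `D_i D_j u(ξ) := D_j u(ξ + a_i) − D_j u(ξ)`. -/
noncomputable def DDd (i j : ZMod 6) (u : ℝ × ℝ → ℝ) (ξ : ℝ × ℝ) : ℝ :=
  Dd j u (ξ + aa i) - Dd j u ξ

lemma aa_explicit : aa 0 = (1,0) ∧ aa 1 = (1/2, Real.sqrt 3/2) ∧ aa 2 = (-(1/2), Real.sqrt 3/2)
    ∧ aa 3 = (-1, 0) ∧ aa 4 = (-(1/2), -(Real.sqrt 3/2)) ∧ aa 5 = (1/2, -(Real.sqrt 3/2)) := by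
  have h2c : Real.cos (Real.pi * 2 / 3) = -(1/2) := by
    have : Real.pi * 2 / 3 = Real.pi - Real.pi / 3 := by ring
    rw [this, Real.cos_pi_sub, Real.cos_pi_div_three]
  have h2s : Real.sin (Real.pi * 2 / 3) = Real.sqrt 3 / 2 := by
    have : Real.pi * 2 / 3 = Real.pi - Real.pi / 3 := by ring
    rw [this, Real.sin_pi_sub, Real.sin_pi_div_three]
  have h4c : Real.cos (Real.pi * 4 / 3) = -(1/2) := by
    have : Real.pi * 4 / 3 = Real.pi / 3 + Real.pi := by ring
    rw [this, Real.cos_add_pi, Real.cos_pi_div_three]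
  have h4s : Real.sin (Real.pi * 4 / 3) = -(Real.sqrt 3 / 2) := by
    have : Real.pi * 4 / 3 = Real.pi / 3 + Real.pi := by ring
    rw [this, Real.sin_add_pi, Real.sin_pi_div_three]
  have h5c : Real.cos (Real.pi * 5 / 3) = 1/2 := by
    have : Real.pi * 5 / 3 = 2 * Real.pi - Real.pi / 3 := by ring
    rw [this, Real.cos_two_pi_sub, Real.cos_pi_div_three]
  have h5s : Real.sin (Real.pi * 5 / 3) = -(Real.sqrt 3 / 2) := by
    have : Real.pi * 5 / 3 = 2 * Real.pi - Real.pi / 3 := by ring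
    rw [this, Real.sin_two_pi_sub, Real.sin_pi_div_three]
  have h1 : Real.pi * 1 / 3 = Real.pi / 3 := by ring
  have h3 : Real.pi * 3 / 3 = Real.pi := by ring
  have v0 : ((0 : ZMod 6)).val = 0 := rfl
  have v1 : ((1 : ZMod 6)).val = 1 := rfl
  have v2 : ((2 : ZMod 6)).val = 2 := rfl
  have v3 : ((3 : ZMod 6)).val = 3 := rfl
  have v4 : ((4 : ZMod 6)).val = 4 := rfl
  have v5 : ((5 : ZMod 6)).val = 5 := rfl
  refine ⟨?_, ?_, ?_, ?_, ?_, ?_⟩ <;>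
    simp [aa, v0, v1, v2, v3, v4, v5, h1, h2c, h2s, h3, h4c, h4s, h5c, h5s,
      Real.cos_pi_div_three, Real.sin_pi_div_three, Prod.ext_iff]

lemma aa_rel (i : ZMod 6) : aa (i+1) = aa i + aa (i+2) ∧ aa (i+3) = -aa i := by
  obtain ⟨h0,h1,h2,h3,h4,h5⟩ := aa_explicit
  have h6 : aa 6 = (1,0) := by rw [show (6:ZMod 6) = 0 from rfl]; exact h0
  have h7 : aa 7 = (1/2, Real.sqrt 3/2) := by rw [show (7:ZMod 6) = 1 from rfl]; exact h1
  have h8 : aa 8 = (-(1/2), Real.sqrt 3/2) := by rw [show (8:ZMod 6) = 2 from rfl]; exact h2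
  have hi : ∀ j : ZMod 6, j = 0 ∨ j = 1 ∨ j = 2 ∨ j = 3 ∨ j = 4 ∨ j = 5 := by decide
  rcases hi i with rfl|rfl|rfl|rfl|rfl|rfl <;>
    norm_num <;>
    simp [show ((0:ZMod 6)+1 : ZMod 6) = 1 from rfl, show ((1:ZMod 6)+1 : ZMod 6) = 2 from rfl,
      show ((2:ZMod 6)+1 : ZMod 6) = 3 from rfl, show ((3:ZMod 6)+1 : ZMod 6) = 4 from rfl,
      show ((4:ZMod 6)+1 : ZMod 6) = 5 from rfl, show ((5:ZMod 6)+1 : ZMod 6) = 0 from rfl,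
      show ((0:ZMod 6)+2 : ZMod 6) = 2 from rfl, show ((1:ZMod 6)+2 : ZMod 6) = 3 from rfl,
      show ((2:ZMod 6)+2 : ZMod 6) = 4 from rfl, show ((3:ZMod 6)+2 : ZMod 6) = 5 from rfl,
      show ((4:ZMod 6)+2 : ZMod 6) = 0 from rfl, show ((5:ZMod 6)+2 : ZMod 6) = 1 from rfl,
      show ((0:ZMod 6)+3 : ZMod 6) = 3 from rfl, show ((1:ZMod 6)+3 : ZMod 6) = 4 from rfl,
      show ((2:ZMod 6)+3 : ZMod 6) = 5 from rfl, show ((3:ZMod 6)+3 : ZMod 6) = 0 from rfl,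
      show ((4:ZMod 6)+3 : ZMod 6) = 1 from rfl, show ((5:ZMod 6)+3 : ZMod 6) = 2 from rfl,
      h0, h1, h2, h3, h4, h5, h6, h7, h8, Prod.ext_iff] <;> norm_num

/-- `D_i u(ξ)·D_{i+2} u(ξ) = ½|D_{i+1}u(ξ)|² − ½|D_{i+2}u(ξ+a_i)|²
− ½|D_{i+3}u(ξ+a_{i+1})|² + ½|D_i D_{i+2} u(ξ)|²`. -/
theorem stmt9 (u : ℝ × ℝ → ℝ) (ξ : ℝ × ℝ) (i : ZMod 6) :
    Dd i u ξ * Dd (i + 2) u ξ =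
      (1/2) * (Dd (i + 1) u ξ) ^ 2 - (1/2) * (Dd (i + 2) u (ξ + aa i)) ^ 2
        - (1/2) * (Dd (i + 3) u (ξ + aa (i + 1))) ^ 2
        + (1/2) * (DDd i (i + 2) u ξ) ^ 2 := by
  obtain ⟨hsum, hneg⟩ := aa_rel i
  have e1 : ξ + aa (i+1) = ξ + aa i + aa (i+2) := by rw [hsum]; ring
  have e2 : ξ + aa i + aa (i+2) + aa (i+3) = ξ + aa (i+2) := by rw [hneg]; ring
  simp only [Dd, DDd, e1, e2]
  ring
end

section
/- Let 𝓡 = {±1,…,±r}, and for u : ℤ → ℝ finitely supported define ⟨H^a u,u⟩ = Σ_{ξ∈ℤ} Σ_{ρ,ς∈𝓡} V_{ρς} D_ρ u(ξ) D_ς u(ξ) with constant symmetric coefficients V_{ρς} ∈ ℝ. Then there exist constants A ∈ ℝ and c_j ∈ ℝ, j = 1,…,2r−1, such that for all finitely supported u, ⟨H^a u,u⟩ = A·Σ_ξ |D_1 u(ξ)|² + Σ_{j=1}^{2r−1} c_j Σ_ξ |D_1 u(ξ) − D_1 u(ξ−j)|². (Strain-gradient representation of the translation-invariant atomistic hessian.)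 -/
/-!
Every finite difference `D_ρ u(ξ)` with `|ρ| ≤ r` is `±` a sum of `D_1 u` over a window of
offsets in `[-r, r)`. Expanding, the hessian becomes a quadratic form in the shifts of `D_1 u`,
and by translation invariance each of its terms only sees the autocorrelation
`T_m = Σ_ξ D_1 u(ξ) D_1 u(ξ + m)` at a lag `|m| < 2r`. Finally
`Σ_ξ |D_1 u(ξ) - D_1 u(ξ - j)|² = 2 T_0 - 2 T_j`, so every `T_j` is `T_0` minus half of the
corresponding strain-gradient term.
-/

/-- The interaction range `𝓡 = {±1, …, ±r}` as a finset of integers. -/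
noncomputable def Rset (r : ℕ) : Finset ℤ := (Finset.Icc (-(r : ℤ)) r).filter (· ≠ 0)

open Function Finset
open scoped fwdDiff

noncomputable def autocorr {R : Type*} [CommRing R] (f : ℤ → R) (m : ℤ) : R := ∑ᶠ ξ, f ξ * f (ξ + m)

section Autocorr

variable {R : Type*} [CommRing R] {f : ℤ → R}

lemma finsum_mul_comp_add (f : ℤ → R) (k l : ℤ) :
    ∑ᶠ ξ, f (ξ + k) * f (ξ + l) = autocorr f (l - k) := by
  rw [autocorr, ← finsum_comp_equiv (Equiv.addRight k) (f := fun ξ => f ξ * f (ξ + (l - k)))]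
  simp

lemma autocorr_neg (f : ℤ → R) (m : ℤ) : autocorr f (-m) = autocorr f m := by
  rw [← zero_sub, ← finsum_mul_comp_add, autocorr]
  exact finsum_congr fun ξ => by rw [add_zero, mul_comm]

lemma autocorr_natAbs (f : ℤ → R) (m : ℤ) : autocorr f m.natAbs = autocorr f m := by
  obtain ⟨n, rfl | rfl⟩ := Int.eq_nat_or_neg m <;> simp [autocorr_neg]

lemma hasFiniteSupport_mul_comp_add (hf : HasFiniteSupport f) (k l : ℤ) :
    HasFiniteSupport fun ξ => f (ξ + k) * f (ξ + l) := by
  fun_prop (disch := exact add_left_injective _)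

lemma finsum_sub_comp_sub_sq (hf : HasFiniteSupport f) (j : ℤ) :
    ∑ᶠ ξ, (f ξ - f (ξ - j)) ^ 2 = 2 * autocorr f 0 - 2 * autocorr f j := by
  -- written with explicit shifts so that `finsum_mul_comp_add` applies to every term
  have hexp : ∀ ξ, (f ξ - f (ξ - j)) ^ 2 = (f (ξ + 0) * f (ξ + 0) + f (ξ + -j) * f (ξ + -j))
      - 2 * (f (ξ + -j) * f (ξ + 0)) := fun ξ => by simp only [add_zero, ← sub_eq_add_neg]; ring
  have hprod := hasFiniteSupport_mul_comp_add hf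
  rw [finsum_congr hexp, finsum_sub_distrib, finsum_add_distrib, ← mul_finsum' _ _ (hprod _ _),
    finsum_mul_comp_add, finsum_mul_comp_add, finsum_mul_comp_add]
  · simp only [sub_self, sub_neg_eq_add, zero_add]
    ring
  all_goals fun_prop

lemma finsum_sum_sum_mul_comp_add (hf : HasFiniteSupport f) (s : Finset ℤ) (K : ℤ → ℤ → R) :
    ∑ᶠ ξ, ∑ k ∈ s, ∑ l ∈ s, K k l * (f (ξ + k) * f (ξ + l)) =
      ∑ k ∈ s, ∑ l ∈ s, K k l * autocorr f (l - k) := by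
  have hprod := hasFiniteSupport_mul_comp_add hf
  rw [finsum_sum_comm]
  · refine sum_congr rfl fun k _ => ?_
    rw [finsum_sum_comm]
    · exact sum_congr rfl fun l _ => by rw [← mul_finsum' _ _ (hprod k l), finsum_mul_comp_add]
    · intro l _; fun_prop
  · intro k _; fun_prop

lemma sum_sum_mul_autocorr (f : ℤ → R) (s : Finset ℤ) (t : Finset ℕ) (K : ℤ → ℤ → R)
    (hst : ∀ k ∈ s, ∀ l ∈ s, (l - k).natAbs ∈ t) :
    ∑ k ∈ s, ∑ l ∈ s, K k l * autocorr f (l - k) =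
      ∑ m ∈ t, (∑ p ∈ s ×ˢ s with (p.2 - p.1).natAbs = m, K p.1 p.2) * autocorr f m := by
  rw [← sum_product' (f := fun k l => K k l * autocorr f (l - k)),
    ← sum_fiberwise_of_maps_to (g := fun p => (p.2 - p.1).natAbs)
      fun p hp => hst _ (mem_product.1 hp).1 _ (mem_product.1 hp).2]
  refine sum_congr rfl fun m _ => ?_
  rw [sum_mul]
  refine sum_congr rfl fun p hp => ?_
  rw [← (mem_filter.1 hp).2, autocorr_natAbs]

end Autocorr

lemma sum_Ico_fwdDiff {G : Type*} [AddCommGroup G] (u : ℤ → G) (ξ : ℤ) {a b : ℤ} (hab : a ≤ b) :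
    ∑ k ∈ Ico a b, Δ_[1] u (ξ + k) = u (ξ + b) - u (ξ + a) := by
  induction b, hab using Int.leInduction with
  | base => simp
  | succ n hn ih =>
    rw [Ico_add_one_right_eq_Icc, ← Ico_insert_right hn, sum_insert right_notMem_Ico, ih, fwdDiff,
      sub_add_sub_cancel, add_assoc]

lemma hasFiniteSupport_fwdDiff {G : Type*} [AddCommGroup G] {u : ℤ → G} (hu : HasFiniteSupport u) (h : ℤ) :
    HasFiniteSupport (Δ_[h] u) := by
  unfold fwdDiff
  fun_prop (disch := exact add_left_injective _)

def window (ρ k : ℤ) : ℝ := (if k < ρ then 1 else 0) - (if k < 0 then 1 else 0)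

lemma fwdDiff_eq_sum_window (u : ℤ → ℝ) {r : ℕ} {ρ : ℤ} (h1 : -(r : ℤ) ≤ ρ) (h2 : ρ ≤ r)
    (ξ : ℤ) : Δ_[ρ] u ξ = ∑ k ∈ Ico (-(r : ℤ)) r, window ρ k * Δ_[1] u (ξ + k) := by
  have hcut : ∀ c, -(r : ℤ) ≤ c → c ≤ r →
      ∑ k ∈ Ico (-(r : ℤ)) r, (if k < c then Δ_[1] u (ξ + k) else 0) = u (ξ + c) - u (ξ + -r) := by
    intro c hc1 hc2
    rw [← sum_filter, Ico_filter_lt, min_eq_right hc2, sum_Ico_fwdDiff u ξ hc1]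
  simp only [window, sub_mul, ite_mul, one_mul, zero_mul, sum_sub_distrib]
  rw [hcut ρ h1 h2, hcut 0 (by omega) (by omega), fwdDiff, add_zero]
  ring

lemma sum_sum_mul_sum_mul_sum {ι κ R : Type*} [CommSemiring R] (I : Finset ι) (s : Finset κ)
    (V : ι → ι → R) (w : ι → κ → R) (g : κ → R) :
    ∑ ρ ∈ I, ∑ ς ∈ I, V ρ ς * (∑ k ∈ s, w ρ k * g k) * (∑ l ∈ s, w ς l * g l) =
      ∑ k ∈ s, ∑ l ∈ s, (∑ ρ ∈ I, ∑ ς ∈ I, V ρ ς * w ρ k * w ς l) * (g k * g l) := by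
  simp only [mul_sum, sum_mul, sum_comm (s := I) (t := s)]
  rw [sum_comm]
  refine sum_congr rfl fun _ _ => sum_congr rfl fun _ _ => sum_congr rfl fun _ _ =>
    sum_congr rfl fun _ _ => by ring

lemma mem_Rset {r : ℕ} {ρ : ℤ} : ρ ∈ Rset r ↔ -(r : ℤ) ≤ ρ ∧ ρ ≤ r ∧ ρ ≠ 0 := by
  simp [Rset, and_assoc]

noncomputable def hessianCoeff (r : ℕ) (V : ℤ → ℤ → ℝ) (m : ℕ) : ℝ :=
  ∑ p ∈ Ico (-(r : ℤ)) r ×ˢ Ico (-(r : ℤ)) r with (p.2 - p.1).natAbs = m,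
    ∑ ρ ∈ Rset r, ∑ ς ∈ Rset r, V ρ ς * window ρ p.1 * window ς p.2

lemma finsum_hessian_eq_sum_autocorr (r : ℕ) (V : ℤ → ℤ → ℝ) {u : ℤ → ℝ}
    (hu : HasFiniteSupport u) :
    ∑ᶠ ξ, ∑ ρ ∈ Rset r, ∑ ς ∈ Rset r, V ρ ς * Δ_[ρ] u ξ * Δ_[ς] u ξ =
      ∑ m ∈ insert 0 (Icc 1 (2 * r - 1)), hessianCoeff r V m * autocorr (Δ_[1] u) m := by
  have hwindow : ∀ ξ, ∑ ρ ∈ Rset r, ∑ ς ∈ Rset r, V ρ ς * Δ_[ρ] u ξ * Δ_[ς] u ξ =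
      ∑ k ∈ Ico (-(r : ℤ)) r, ∑ l ∈ Ico (-(r : ℤ)) r,
        (∑ ρ ∈ Rset r, ∑ ς ∈ Rset r, V ρ ς * window ρ k * window ς l) *
          (Δ_[1] u (ξ + k) * Δ_[1] u (ξ + l)) := by
    intro ξ
    rw [← sum_sum_mul_sum_mul_sum]
    refine sum_congr rfl fun ρ hρ => sum_congr rfl fun ς hς => ?_
    obtain ⟨hρ1, hρ2, -⟩ := mem_Rset.1 hρ
    obtain ⟨hς1, hς2, -⟩ := mem_Rset.1 hς
    rw [← fwdDiff_eq_sum_window u hρ1 hρ2, ← fwdDiff_eq_sum_window u hς1 hς2]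
  rw [finsum_congr hwindow, finsum_sum_sum_mul_comp_add (hasFiniteSupport_fwdDiff hu 1),
    sum_sum_mul_autocorr]
  · rfl
  · intro k hk l hl
    simp only [mem_Ico] at hk hl
    simp only [mem_insert, mem_Icc]
    omega

theorem stmt13_general (r : ℕ) (V : ℤ → ℤ → ℝ) :
    ∃ A : ℝ, ∃ c : ℕ → ℝ, ∀ u : ℤ → ℝ, (Function.support u).Finite →
      (∑ᶠ ξ : ℤ, ∑ ρ ∈ Rset r, ∑ ς ∈ Rset r,
          V ρ ς * (u (ξ + ρ) - u ξ) * (u (ξ + ς) - u ξ)) =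
        A * (∑ᶠ ξ : ℤ, (u (ξ + 1) - u ξ) ^ 2) +
          ∑ j ∈ Finset.Icc 1 (2 * r - 1), c j *
            ∑ᶠ ξ : ℤ, ((u (ξ + 1) - u ξ) - (u (ξ - (j : ℤ) + 1) - u (ξ - (j : ℤ)))) ^ 2 := by
  refine ⟨hessianCoeff r V 0 + ∑ j ∈ Icc 1 (2 * r - 1), hessianCoeff r V j,
    fun j => -hessianCoeff r V j / 2,
    fun u hu => (finsum_hessian_eq_sum_autocorr r V hu).trans ?_⟩
  set W := hessianCoeff r V
  set T := autocorr (Δ_[1] u)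
  have hT0 : ∑ᶠ ξ, (u (ξ + 1) - u ξ) ^ 2 = T 0 := by simp [T, autocorr, fwdDiff, sq]
  have hS (j : ℕ) : ∑ᶠ ξ, ((u (ξ + 1) - u ξ) - (u (ξ - j + 1) - u (ξ - j))) ^ 2 =
      2 * T 0 - 2 * T j :=
    finsum_sub_comp_sub_sq (hasFiniteSupport_fwdDiff hu 1) j
  have hsplit : ∑ j ∈ Icc 1 (2 * r - 1), -W j / 2 * (2 * T 0 - 2 * T j) =
      ∑ j ∈ Icc 1 (2 * r - 1), W j * T j - (∑ j ∈ Icc 1 (2 * r - 1), W j) * T 0 := by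
    rw [sum_mul, ← sum_sub_distrib]
    exact sum_congr rfl fun j _ => by ring
  rw [sum_insert (by simp), hT0]
  simp only [hS, hsplit, Nat.cast_zero]
  ring

/-- strain-gradient representation of the translation-invariant
atomistic hessian: `⟨H^a u,u⟩ = A Σ|D_1 u|² + Σ_{j=1}^{2r−1} c_j Σ |D_1u(ξ) − D_1u(ξ−j)|²`. -/
theorem stmt13 (r : ℕ) (V : ℤ → ℤ → ℝ) (hsymm : ∀ ρ ς, V ρ ς = V ς ρ) :
    ∃ A : ℝ, ∃ c : ℕ → ℝ, ∀ u : ℤ → ℝ, (Function.support u).Finite →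
      (∑ᶠ ξ : ℤ, ∑ ρ ∈ Rset r, ∑ ς ∈ Rset r,
          V ρ ς * (u (ξ + ρ) - u ξ) * (u (ξ + ς) - u ξ)) =
        A * (∑ᶠ ξ : ℤ, (u (ξ + 1) - u ξ) ^ 2) +
          ∑ j ∈ Finset.Icc 1 (2 * r - 1), c j *
            ∑ᶠ ξ : ℤ, ((u (ξ + 1) - u ξ) - (u (ξ - (j : ℤ) + 1) - u (ξ - (j : ℤ)))) ^ 2 :=
  stmt13_general r V
end
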